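/- For any languages L₁, L₂ and k ∈ ℕ, every word w ∈ H_k(L₁, L₂) admits a factorization w = γαβ·bar(α)·bar(γ) with |α| = k and |bar(γ)| minimal among all witnessing factorizations; for this minimal factorization, either γαβ·bar(α) is the longest prefix of w that lies in L₁, or αβ·bar(α)·bar(γ) is the longest suffix of w that lies in L₂ (or both). -/
import Mathlib


def barw {α : Type} (bar : α → α) (w : List α) : List α := (w.map bar).reverse

def hairpin {α : Type} (bar : α → α) (k : ℕ) (L₁ L₂ : Language α) : Language α :=
  { w | ∃ γ a β : List α, w = γ ++ a ++ β ++ barw bar a ++ barw bar γ ∧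
      a.length = k ∧
      (γ ++ a ++ β ++ barw bar a ∈ L₁ ∨ a ++ β ++ barw bar a ++ barw bar γ ∈ L₂) }

/-- A witnessing factorization of `w ∈ H_k(L₁,L₂)`. -/
def Witness {α : Type} (bar : α → α) (k : ℕ) (L₁ L₂ : Language α)
    (w γ a β : List α) : Prop :=
  w = γ ++ a ++ β ++ barw bar a ++ barw bar γ ∧ a.length = k ∧
    (γ ++ a ++ β ++ barw bar a ∈ L₁ ∨ a ++ β ++ barw bar a ++ barw bar γ ∈ L₂)

lemma barw_append {α : Type} (bar : α → α) (x y : List α) :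
    barw bar (x ++ y) = barw bar y ++ barw bar x := by simp [barw]

lemma barw_length {α : Type} (bar : α → α) (x : List α) :
    (barw bar x).length = x.length := by simp [barw]

/-- From a decomposition `w = g ++ β ++ barw g`, any cut point `m` with
`m + k ≤ |g|` yields a factorization of hairpin shape. -/
lemma split_witness {α : Type} (bar : α → α) (k : ℕ) (w g β : List α)
    (hw : w = g ++ β ++ barw bar g) (m : ℕ) (hm : m + k ≤ g.length) :
    ∃ γ' a' β' : List α, γ'.length = m ∧ a'.length = k ∧
      w = γ' ++ a' ++ β' ++ barw bar a' ++ barw bar γ' := by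
  refine ⟨(g.take (m+k)).take m, (g.take (m+k)).drop m,
    g.drop (m+k) ++ β ++ barw bar (g.drop (m+k)), ?_, ?_, ?_⟩
  · simp; omega
  · simp; omega
  · rw [hw]
    generalize hx : List.take m (List.take (m+k) g) = x
    generalize hy : List.drop m (List.take (m+k) g) = y
    generalize hz : List.drop (m+k) g = z
    have hg : g = x ++ y ++ z := by
      rw [← hx, ← hy, ← hz, List.take_append_drop, List.take_append_drop]
    rw [hg, barw_append, barw_append]
    simp [List.append_assoc]

theorem minimal_factorization {α : Type} (bar : α → α) (k : ℕ)
    (L₁ L₂ : Language α) (w : List α) (hw : w ∈ hairpin bar k L₁ L₂) :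
    ∃ γ a β : List α, Witness bar k L₁ L₂ w γ a β ∧
      (∀ γ' a' β' : List α, Witness bar k L₁ L₂ w γ' a' β' →
        (barw bar γ).length ≤ (barw bar γ').length) ∧
      ((γ ++ a ++ β ++ barw bar a ∈ L₁ ∧
          ∀ p : List α, p <+: w → p ∈ L₁ →
            p.length ≤ (γ ++ a ++ β ++ barw bar a).length) ∨
        (a ++ β ++ barw bar a ++ barw bar γ ∈ L₂ ∧
          ∀ s : List α, s <:+ w → s ∈ L₂ →
            s.length ≤ (a ++ β ++ barw bar a ++ barw bar γ).length)) := by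
  classical
  have hex : ∃ n : ℕ, ∃ γ a β : List α,
      Witness bar k L₁ L₂ w γ a β ∧ γ.length = n := by
    obtain ⟨γ, a, β, h1, h2, h3⟩ := hw
    exact ⟨γ.length, γ, a, β, ⟨h1, h2, h3⟩, rfl⟩
  obtain ⟨γ, a, β, hwit, hlenγ⟩ := Nat.find_spec hex
  have hmin : ∀ γ' a' β' : List α, Witness bar k L₁ L₂ w γ' a' β' →
      γ.length ≤ γ'.length := by
    intro γ' a' β' h
    rw [hlenγ]
    exact Nat.find_min' hex ⟨γ', a', β', h, rfl⟩
  obtain ⟨hweq, hak, hL⟩ := hwit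
  -- basic length bookkeeping
  have hwlen : w.length = γ.length + k + β.length + k + γ.length := by
    rw [hweq]; simp [barw_length, hak]; omega
  have hgw : w = (γ ++ a) ++ β ++ barw bar (γ ++ a) := by
    rw [hweq, barw_append]; simp [List.append_assoc]
  -- the smaller-witness argument, packaged for both sides
  have key : ∀ m : ℕ, m < γ.length →
      ∃ γ' a' β' : List α, γ'.length = m ∧ a'.length = k ∧
        w = γ' ++ a' ++ β' ++ barw bar a' ++ barw bar γ' := by
    intro m hm
    exact split_witness bar k w (γ ++ a) β hgw m (by simp [hak]; omega)
  refine ⟨γ, a, β, ⟨hweq, hak, hL⟩, ?_, ?_⟩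
  · intro γ' a' β' h
    rw [barw_length, barw_length]
    exact hmin γ' a' β' h
  · rcases hL with hL1 | hL2
    · left
      refine ⟨hL1, ?_⟩
      intro p hp hpL
      by_contra hlong
      push_neg at hlong
      have hplen : (γ ++ a ++ β ++ barw bar a).length
          = γ.length + k + β.length + k := by
        simp [barw_length, hak]; omega
      rw [hplen] at hlong
      have hple : p.length ≤ w.length := hp.length_le
      set m := w.length - p.length with hmdef
      have hmlt : m < γ.length := by omega
      obtain ⟨γ', a', β', hγ'm, ha'k, hweq'⟩ := key m hmlt
      obtain ⟨s, hs⟩ := hp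
      have hslen : s.length = m := by
        have := congrArg List.length hs
        simp at this; omega
      have hps : p ++ s
          = (γ' ++ a' ++ β' ++ barw bar a') ++ barw bar γ' := by
        rw [hs, hweq']; try simp [List.append_assoc]
      have hinj := List.append_inj' hps (by rw [hslen, barw_length, hγ'm])
      have hwit' : Witness bar k L₁ L₂ w γ' a' β' := by
        refine ⟨hweq', ha'k, Or.inl ?_⟩
        rw [show γ' ++ a' ++ β' ++ barw bar a' = p from hinj.1.symm]
        exact hpL
      have := hmin γ' a' β' hwit'
      omega
    · right
      refine ⟨hL2, ?_⟩
      intro s hsfx hsL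
      by_contra hlong
      push_neg at hlong
      have hslen0 : (a ++ β ++ barw bar a ++ barw bar γ).length
          = k + β.length + k + γ.length := by
        simp [barw_length, hak]; omega
      rw [hslen0] at hlong
      have hsle : s.length ≤ w.length := hsfx.length_le
      set m := w.length - s.length with hmdef
      have hmlt : m < γ.length := by omega
      obtain ⟨γ', a', β', hγ'm, ha'k, hweq'⟩ := key m hmlt
      obtain ⟨t, ht⟩ := hsfx
      have htlen : t.length = m := by
        have := congrArg List.length ht
        simp at this; omega
      have hts : t ++ s
          = γ' ++ (a' ++ β' ++ barw bar a' ++ barw bar γ') := by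
        rw [ht, hweq']; try simp [List.append_assoc]
      have hinj := List.append_inj hts (by rw [htlen, hγ'm])
      have hwit' : Witness bar k L₁ L₂ w γ' a' β' := by
        refine ⟨hweq', ha'k, Or.inr ?_⟩
        rw [show a' ++ β' ++ barw bar a' ++ barw bar γ' = s from hinj.2.symm]
        exact hsL
      have := hmin γ' a' β' hwit'
      omega
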